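/- Let H be a d-uniform hypergraph (d ≥ 2) on the vertex set {x_{ji} : 1 ≤ j ≤ n, 1 ≤ i ≤ d} (with these nd vertices distinct) such that {{x_{j1}, x_{j2}, …, x_{jd}} : 1 ≤ j ≤ n} is a perfect matching of H. Suppose that for every 1 ≤ q ≤ n, whenever 𝔢_1 and 𝔢_2 are submaximal edges of H with 𝔢_1 ∼ x_{q i_1} and 𝔢_2 ∼ x_{q i_2} for distinct indices i_1, i_2 in {1, …, d}, the set 𝔢_1 ∪ 𝔢_2 is not independent. Then H is unmixed. -/

import Mathlib

/-- `C` is a vertex cover of the hypergraph `H`: it meets every hyperedge. -/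
def IsVertexCover {V : Type*} [DecidableEq V] (H : Finset (Finset V)) (C : Finset V) : Prop :=
  ∀ e ∈ H, (e ∩ C).Nonempty

/-- `C` is a minimal vertex cover of `H`. -/
def IsMinimalVertexCover {V : Type*} [DecidableEq V] (H : Finset (Finset V)) (C : Finset V) :
    Prop :=
  IsVertexCover H C ∧ ∀ C' ⊂ C, ¬ IsVertexCover H C'

/-- `H` is unmixed: all minimal vertex covers have the same cardinality. -/
def IsUnmixed {V : Type*} [DecidableEq V] (H : Finset (Finset V)) : Prop :=
  ∀ C₁ C₂ : Finset V, IsMinimalVertexCover H C₁ → IsMinimalVertexCover H C₂ →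
    C₁.card = C₂.card

/-- `M` is an independent set of `H`: it contains no hyperedge. -/
def IsIndependent {V : Type*} (H : Finset (Finset V)) (M : Finset V) : Prop :=
  ∀ e ∈ H, ¬ e ⊆ M

/-- `𝔢` is a submaximal edge of the `d`-uniform hypergraph `H`: a `(d-1)`-element
subset of some hyperedge. -/
def IsSubmaximalEdge {V : Type*} (H : Finset (Finset V)) (d : ℕ) (𝔢 : Finset V) : Prop :=
  (∃ e ∈ H, 𝔢 ⊆ e) ∧ 𝔢.card = d - 1

/-!
Every vertex `v` of a minimal vertex cover `C` has a private hyperedge `e ∋ v` with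
`(e \ {v}) ∩ C = ∅`. If `C` contained two vertices `(q, i₁)`, `(q, i₂)` of the same row, the
union of the two submaximal edges left by their private hyperedges would avoid `C`, hence be
independent, against the hypothesis. So `C` meets each row, a hyperedge, in exactly one
vertex, and `|C| = n`.
-/

section VertexCover

variable {V : Type*} [DecidableEq V] {H : Finset (Finset V)} {C : Finset V}

theorem IsVertexCover.isIndependent_of_disjoint (hC : IsVertexCover H C) {M : Finset V}
    (hM : Disjoint M C) : IsIndependent H M := by
  intro e he heM
  obtain ⟨v, hv⟩ := hC e he
  rw [Finset.mem_inter] at hv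
  exact Finset.disjoint_left.mp hM (heM hv.1) hv.2

theorem IsMinimalVertexCover.exists_private_edge (hC : IsMinimalVertexCover H C) {v : V}
    (hv : v ∈ C) : ∃ e ∈ H, v ∈ e ∧ Disjoint (e.erase v) C := by
  have hnot := hC.2 _ (Finset.erase_ssubset hv)
  simp only [IsVertexCover, not_forall] at hnot
  obtain ⟨e, he, hmiss⟩ := hnot
  have avoid : ∀ w ∈ e, w ∈ C → w = v := fun w hwe hwC => by
    by_contra hwv
    exact hmiss ⟨w, Finset.mem_inter.mpr ⟨hwe, Finset.mem_erase.mpr ⟨hwv, hwC⟩⟩⟩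
  obtain ⟨w, hw⟩ := hC.1 e he
  rw [Finset.mem_inter] at hw
  refine ⟨e, he, avoid w hw.1 hw.2 ▸ hw.1, Finset.disjoint_left.mpr fun w hw hwC => ?_⟩
  exact Finset.ne_of_mem_erase hw (avoid w (Finset.mem_of_mem_erase hw) hwC)

end VertexCover

theorem isSubmaximalEdge_erase {V : Type*} [DecidableEq V] {H : Finset (Finset V)} {d : ℕ}
    (huniform : ∀ e ∈ H, e.card = d) {e : Finset V} (he : e ∈ H) {v : V} (hv : v ∈ e) :
    IsSubmaximalEdge H d (e.erase v) :=
  ⟨⟨e, he, Finset.erase_subset v e⟩, by rw [Finset.card_erase_of_mem hv, huniform e he]⟩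

theorem Finset.card_eq_card_of_existsUnique_snd {α β : Type*} [Fintype α] (C : Finset (α × β))
    (h : ∀ a, ∃! b, (a, b) ∈ C) : C.card = Fintype.card α := by
  rw [← Finset.card_univ]
  refine Finset.card_bij (fun v _ => v.1) (fun _ _ => Finset.mem_univ _) ?_ ?_
  · rintro ⟨a, b⟩ hb ⟨a', b'⟩ hb' (rfl : a = a')
    rw [(h a).unique hb hb']
  · intro a _
    obtain ⟨b, hb, -⟩ := h a
    exact ⟨(a, b), hb, rfl⟩

section Rows

variable {n d : ℕ} {H : Finset (Finset (Fin n × Fin d))} {C : Finset (Fin n × Fin d)}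

theorem IsMinimalVertexCover.eq_of_mem_row (huniform : ∀ e ∈ H, e.card = d)
    (hcond : ∀ q : Fin n, ∀ i₁ i₂ : Fin d, i₁ ≠ i₂ →
      ∀ 𝔢₁ 𝔢₂ : Finset (Fin n × Fin d),
        IsSubmaximalEdge H d 𝔢₁ → IsSubmaximalEdge H d 𝔢₂ →
        insert (q, i₁) 𝔢₁ ∈ H → insert (q, i₂) 𝔢₂ ∈ H →
        ¬ IsIndependent H (𝔢₁ ∪ 𝔢₂))
    (hC : IsMinimalVertexCover H C) {q : Fin n} {i₁ i₂ : Fin d}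
    (h₁ : (q, i₁) ∈ C) (h₂ : (q, i₂) ∈ C) : i₁ = i₂ := by
  by_contra hne
  obtain ⟨e₁, he₁, hv₁, hdisj₁⟩ := hC.exists_private_edge h₁
  obtain ⟨e₂, he₂, hv₂, hdisj₂⟩ := hC.exists_private_edge h₂
  refine hcond q i₁ i₂ hne _ _ (isSubmaximalEdge_erase huniform he₁ hv₁)
    (isSubmaximalEdge_erase huniform he₂ hv₂) (by rwa [Finset.insert_erase hv₁])
    (by rwa [Finset.insert_erase hv₂]) ?_
  exact hC.1.isIndependent_of_disjoint (Finset.disjoint_union_left.mpr ⟨hdisj₁, hdisj₂⟩)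

theorem IsMinimalVertexCover.card_eq (huniform : ∀ e ∈ H, e.card = d)
    (hmatching : ∀ j : Fin n, Finset.univ.image (fun i : Fin d => (j, i)) ∈ H)
    (hcond : ∀ q : Fin n, ∀ i₁ i₂ : Fin d, i₁ ≠ i₂ →
      ∀ 𝔢₁ 𝔢₂ : Finset (Fin n × Fin d),
        IsSubmaximalEdge H d 𝔢₁ → IsSubmaximalEdge H d 𝔢₂ →
        insert (q, i₁) 𝔢₁ ∈ H → insert (q, i₂) 𝔢₂ ∈ H →
        ¬ IsIndependent H (𝔢₁ ∪ 𝔢₂))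
    (hC : IsMinimalVertexCover H C) : C.card = n := by
  rw [C.card_eq_card_of_existsUnique_snd, Fintype.card_fin]
  intro q
  obtain ⟨v, hv⟩ := hC.1 _ (hmatching q)
  obtain ⟨hvrow, hvC⟩ := Finset.mem_inter.mp hv
  obtain ⟨i, -, rfl⟩ := Finset.mem_image.mp hvrow
  exact ⟨i, hvC, fun i' hi' => hC.eq_of_mem_row huniform hcond hi' hvC⟩

end Rows

theorem sufficient_condition_unmixed_matching_general {n d : ℕ}
    (H : Finset (Finset (Fin n × Fin d)))
    -- `H` is `d`-uniform
    (huniform : ∀ e ∈ H, e.card = d)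
    -- the rows `{(j, 1), …, (j, d)}` are hyperedges (they form a perfect matching)
    (hmatching : ∀ j : Fin n, Finset.univ.image (fun i : Fin d => (j, i)) ∈ H)
    (hcond : ∀ q : Fin n, ∀ i₁ i₂ : Fin d, i₁ ≠ i₂ →
      ∀ 𝔢₁ 𝔢₂ : Finset (Fin n × Fin d),
        IsSubmaximalEdge H d 𝔢₁ → IsSubmaximalEdge H d 𝔢₂ →
        insert (q, i₁) 𝔢₁ ∈ H → insert (q, i₂) 𝔢₂ ∈ H →
        ¬ IsIndependent H (𝔢₁ ∪ 𝔢₂)) :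
    IsUnmixed H := fun _ _ h₁ h₂ => by
  rw [h₁.card_eq huniform hmatching hcond, h₂.card_eq huniform hmatching hcond]

/-- let `H` be a `d`-uniform hypergraph (`d ≥ 2`) on the vertex set
`{x_{ji} = (j, i)}` such that the rows `{x_{j1}, …, x_{jd}}` form a perfect matching.
If for every `q`, whenever `𝔢₁ ∼ x_{q i₁}` and `𝔢₂ ∼ x_{q i₂}` for submaximal edges
`𝔢₁, 𝔢₂` and distinct `i₁, i₂`, the set `𝔢₁ ∪ 𝔢₂` is not independent, then `H`
is unmixed. -/
theorem sufficient_condition_unmixed_matching {n d : ℕ} (hd : 2 ≤ d)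
    (H : Finset (Finset (Fin n × Fin d)))
    -- every vertex lies in some hyperedge (the union of the hyperedges is the vertex set)
    (hunion : ∀ v : Fin n × Fin d, ∃ e ∈ H, v ∈ e)
    -- `H` is `d`-uniform
    (huniform : ∀ e ∈ H, e.card = d)
    -- the rows `{(j, 1), …, (j, d)}` are hyperedges (they form a perfect matching)
    (hmatching : ∀ j : Fin n, Finset.univ.image (fun i : Fin d => (j, i)) ∈ H)
    (hcond : ∀ q : Fin n, ∀ i₁ i₂ : Fin d, i₁ ≠ i₂ →
      ∀ 𝔢₁ 𝔢₂ : Finset (Fin n × Fin d),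
        IsSubmaximalEdge H d 𝔢₁ → IsSubmaximalEdge H d 𝔢₂ →
        insert (q, i₁) 𝔢₁ ∈ H → insert (q, i₂) 𝔢₂ ∈ H →
        ¬ IsIndependent H (𝔢₁ ∪ 𝔢₂)) :
    IsUnmixed H :=
  sufficient_condition_unmixed_matching_general H huniform hmatching hcond
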